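/- Let p be a prime, and let G be a simple graph on vertices v_1,…,v_n with maximum degree Δ, and suppose p > 2Δ²n and t < p. Then G is t-colorable if and only if the polynomial P(v) = ∏_{c}( ∏_{d ∈ N(v_c)} (v_c − v_d) · ∏_{l=t+1}^{p} (v_c − l) ) over Z_p is not identically zero as a function on Z_p^n, i.e., there exists α ∈ Z_p^n with P(α) ≢ 0 mod p. -/

import Mathlib

/-!
Encode the colors `1, …, t` as the residues with `val ∈ [1, t]`. Since `t < p`, the second
factor of `P` at `v_c` vanishes exactly when `α c` is not such a residue (the root `l = p` is `0`),
and the edge factors vanish exactly when adjacent vertices get equal values; as `ZMod p` is a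
field, `P(α) ≠ 0` says precisely that `α` is a proper coloring by these `t` residues.
-/

open MvPolynomial

namespace ZMod

variable {p : ℕ}

theorem prod_Icc_sub_natCast_ne_zero_iff [Fact p.Prime] {t : ℕ} (htp : t < p) (x : ZMod p) :
    ∏ l ∈ Finset.Icc (t + 1) p, (x - l) ≠ 0 ↔ x.val ∈ Finset.Icc 1 t := by
  simp only [Finset.prod_ne_zero_iff, sub_ne_zero, Finset.mem_Icc]
  constructor
  · intro h
    have hx := x.val_lt
    refine ⟨Nat.one_le_iff_ne_zero.mpr fun h0 => ?_, not_lt.mp fun hgt => ?_⟩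
    · exact h p ⟨by omega, le_rfl⟩ (by rw [natCast_self, ← val_eq_zero, h0])
    · exact h x.val ⟨hgt, hx.le⟩ (natCast_zmod_val x).symm
  · rintro ⟨h1, ht⟩ l ⟨hl1, hl2⟩ rfl
    rw [val_natCast] at h1 ht
    rcases hl2.lt_or_eq with hlp | rfl
    · rw [Nat.mod_eq_of_lt hlp] at ht
      omega
    · simp at h1

end ZMod

namespace SimpleGraph

variable {V : Type*} (G : SimpleGraph V)

theorem colorable_iff_exists_zmod {p t : ℕ} [NeZero p] (htp : t < p) :
    G.Colorable t ↔ ∃ α : V → ZMod p,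
      (∀ v, (α v).val ∈ Finset.Icc 1 t) ∧ ∀ v w, G.Adj v w → α v ≠ α w := by
  have val_succ (k : ℕ) (hk : k < t) : ((k + 1 : ℕ) : ZMod p).val = k + 1 := by
    rw [ZMod.val_natCast, Nat.mod_eq_of_lt (by omega)]
  rw [colorable_iff_exists_bdd_nat_coloring]
  constructor
  · rintro ⟨C, hC⟩
    refine ⟨fun v => ((C v + 1 : ℕ) : ZMod p), fun v => ?_, fun v w hvw heq => C.valid hvw ?_⟩
    · simp only [val_succ _ (hC v), Finset.mem_Icc]
      exact ⟨by omega, hC v⟩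
    · have := congrArg ZMod.val heq
      rw [val_succ _ (hC v), val_succ _ (hC w)] at this
      omega
  · rintro ⟨α, hα, hadj⟩
    refine ⟨Coloring.mk (fun v => (α v).val - 1) fun {v w} hvw heq => hadj v w hvw ?_, fun v => ?_⟩
    · have := hα v
      have := hα w
      simp only [Finset.mem_Icc] at *
      exact ZMod.val_injective p (by omega)
    · have := hα v
      simp only [Finset.mem_Icc] at this
      show (α v).val - 1 < t
      omega

variable [Fintype V] [DecidableRel G.Adj]

noncomputable def coloringPolynomial (p t : ℕ) : MvPolynomial V (ZMod p) :=
  ∏ c, ((∏ d ∈ G.neighborFinset c, (X c - X d)) *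
    ∏ l ∈ Finset.Icc (t + 1) p, (X c - C (l : ZMod p)))

theorem eval_coloringPolynomial_ne_zero_iff {p t : ℕ} [Fact p.Prime] (htp : t < p)
    (α : V → ZMod p) :
    eval α (G.coloringPolynomial p t) ≠ 0 ↔
      (∀ v, (α v).val ∈ Finset.Icc 1 t) ∧ ∀ v w, G.Adj v w → α v ≠ α w := by
  simp only [coloringPolynomial, map_prod, map_mul, map_sub, eval_X, eval_C,
    Finset.prod_ne_zero_iff, Finset.mem_univ, true_implies, mul_ne_zero_iff, forall_and,
    ZMod.prod_Icc_sub_natCast_ne_zero_iff htp, sub_ne_zero, mem_neighborFinset, and_comm]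

end SimpleGraph

theorem stmt4_general {n : ℕ} (G : SimpleGraph (Fin n)) [DecidableRel G.Adj]
    (p t : ℕ) (hp : p.Prime) (htp : t < p) :
    G.Colorable t ↔
      ∃ α : Fin n → ZMod p,
        MvPolynomial.eval α
          (∏ c : Fin n,
            ((∏ d ∈ G.neighborFinset c, (X c - X d)) *
              ∏ l ∈ Finset.Icc (t + 1) p, (X c - C (l : ZMod p)))) ≠ 0 := by
  have := Fact.mk hp
  rw [G.colorable_iff_exists_zmod htp]
  exact exists_congr fun α => (G.eval_coloringPolynomial_ne_zero_iff htp α).symm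

/-- For a prime `p > 2Δ²n` and `0 < t < p`, a simple graph `G` on `n` vertices is
`t`-colorable iff the polynomial
`P = ∏_c (∏_{d ∈ N(c)} (v_c − v_d) · ∏_{l=t+1}^{p} (v_c − l))` over `ℤ/p`
does not vanish identically as a function on `(ℤ/p)^n`. -/
theorem stmt4 {n : ℕ} (G : SimpleGraph (Fin n)) [DecidableRel G.Adj]
    (p t : ℕ) (hp : p.Prime) (hpbig : 2 * G.maxDegree ^ 2 * n < p)
    (ht : 0 < t) (htp : t < p) :
    G.Colorable t ↔
      ∃ α : Fin n → ZMod p,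
        MvPolynomial.eval α
          (∏ c : Fin n,
            ((∏ d ∈ G.neighborFinset c, (X c - X d)) *
              ∏ l ∈ Finset.Icc (t + 1) p, (X c - C (l : ZMod p)))) ≠ 0 :=
  stmt4_general G p t hp htp
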